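/- Fix an initial state x ∈ ℝ^n, an input bound ε₀ ≥ 0, and a horizon N. Then the resilience metric under open-loop controllers satisfies: sup{ μ ≥ 0 : there exists a sequence u(0), …, u(N−1) ∈ ℝ^m with ‖u(i)‖∞ ≤ ε₀ such that for every disturbance sequence d(0), …, d(N−1) with ‖d(i)‖∞ ≤ μ, the trajectory x(0) = x, x(k+1) = A_k x(k) + B_k u(k) + d(k) satisfies G_k x(k) ≤ H_k for all k = 0, …, N } = sup{ μ ≥ 0 : there exist ũ(0), …, ũ(N−1) ∈ ℝ^m with ‖ũ(i)‖∞ ≤ 1 and a nonnegative matrix P ∈ ℝ^{(N+1)q × 2n(N+1)} with P A_b = μ E^{ol} and P B_b ≤ F^{ol}(x, ũ, ε₀) }. -/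

import Mathlib

/-!
Write the inputs as `u = ε₀ ũ` and stack the disturbances into `δ`. Since the trajectory is
affine in the disturbances, `G_k x(k) - H_k = (E^{ol} δ)_k - F^{ol}_k`, so a disturbance bound
`μ` is tolerated exactly when `E^{ol} δ ≤ F^{ol}` holds on the whole box `|δ| ≤ μ`. Row by row,
the worst case over the box is `μ ∑_j |E_ij|`. A nonnegative `P` with `P A_b = μ E` and
`P B_b ≤ F` therefore exists exactly in that case: take `P = μ [E⁺, E⁻]`; conversely,
`μ E δ = P (A_b δ) ≤ μ P B_b`. So the two sets of admissible `μ` are the same set.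
-/

open Matrix Finset

noncomputable section

/-- Ordered product `M (k-1) * M (k-2) * ⋯ * M i` (empty product = identity when `k ≤ i`). -/
def mprod {n : ℕ} (M : ℕ → Matrix (Fin n) (Fin n) ℝ) (i k : ℕ) :
    Matrix (Fin n) (Fin n) ℝ :=
  (((List.range' i (k - i)).reverse).map M).prod

def Abar {n m : ℕ} (A : ℕ → Matrix (Fin n) (Fin n) ℝ) (B : ℕ → Matrix (Fin n) (Fin m) ℝ)
    (α₁ : Matrix (Fin m) (Fin n) ℝ) (j : ℕ) : Matrix (Fin n) (Fin n) ℝ :=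
  A j + B j * α₁

def trajCL {n m : ℕ} (A : ℕ → Matrix (Fin n) (Fin n) ℝ) (B : ℕ → Matrix (Fin n) (Fin m) ℝ)
    (α₁ : Matrix (Fin m) (Fin n) ℝ) (α₂ : Fin m → ℝ) (d : ℕ → Fin n → ℝ)
    (x0 : Fin n → ℝ) : ℕ → Fin n → ℝ
  | 0 => x0
  | k + 1 =>
      (A k).mulVec (trajCL A B α₁ α₂ d x0 k)
        + (B k).mulVec (α₁.mulVec (trajCL A B α₁ α₂ d x0 k) + α₂) + d k

def Eblk {n : ℕ} (N : ℕ) (M : ℕ → Matrix (Fin n) (Fin n) ℝ) (k : ℕ) :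
    Matrix (Fin n) (Fin (N + 1) × Fin n) ℝ :=
  Matrix.of fun r jc =>
    if 1 ≤ (jc.1 : ℕ) ∧ (jc.1 : ℕ) ≤ k then mprod M (jc.1 : ℕ) k r jc.2 else 0

def Fblk {n m : ℕ} (A : ℕ → Matrix (Fin n) (Fin n) ℝ) (B : ℕ → Matrix (Fin n) (Fin m) ℝ)
    (α₁ : Matrix (Fin m) (Fin n) ℝ) (α₂ : Fin m → ℝ) (x : Fin n → ℝ) (k : ℕ) : Fin n → ℝ :=
  (mprod (Abar A B α₁) 0 k).mulVec x
    + ∑ i ∈ Finset.range k, (mprod (Abar A B α₁) (i + 1) k * B i).mulVec α₂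

def Ex {n m q : ℕ} (N : ℕ) (A : ℕ → Matrix (Fin n) (Fin n) ℝ)
    (B : ℕ → Matrix (Fin n) (Fin m) ℝ) (G : ℕ → Matrix (Fin q) (Fin n) ℝ)
    (α₁ : Matrix (Fin m) (Fin n) ℝ) :
    Matrix (Fin (N + 1) × Fin q) (Fin (N + 1) × Fin n) ℝ :=
  Matrix.of fun kr jc => (G (kr.1 : ℕ) * Eblk N (Abar A B α₁) (kr.1 : ℕ)) kr.2 jc

def Fx {n m q : ℕ} (N : ℕ) (A : ℕ → Matrix (Fin n) (Fin n) ℝ)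
    (B : ℕ → Matrix (Fin n) (Fin m) ℝ) (G : ℕ → Matrix (Fin q) (Fin n) ℝ)
    (H : ℕ → Fin q → ℝ) (α₁ : Matrix (Fin m) (Fin n) ℝ) (α₂ : Fin m → ℝ)
    (x : Fin n → ℝ) : Fin (N + 1) × Fin q → ℝ :=
  fun kr => H (kr.1 : ℕ) kr.2 - (G (kr.1 : ℕ)).mulVec (Fblk A B α₁ α₂ x (kr.1 : ℕ)) kr.2

def Au (m : ℕ) : Matrix (Fin m ⊕ Fin m) (Fin m) ℝ := Matrix.fromRows 1 (-1)

def Sk {n m : ℕ} (A : ℕ → Matrix (Fin n) (Fin n) ℝ) (B : ℕ → Matrix (Fin n) (Fin m) ℝ)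
    (α₁ : Matrix (Fin m) (Fin n) ℝ) (α₂ : Fin m → ℝ) (x : Fin n → ℝ) (k : ℕ) : Fin m → ℝ :=
  α₁.mulVec (Fblk A B α₁ α₂ x k) + α₂

def Ecl {n m q : ℕ} (N : ℕ) (A : ℕ → Matrix (Fin n) (Fin n) ℝ)
    (B : ℕ → Matrix (Fin n) (Fin m) ℝ) (G : ℕ → Matrix (Fin q) (Fin n) ℝ)
    (α₁ : Matrix (Fin m) (Fin n) ℝ) :
    Matrix ((Fin (N + 1) × Fin q) ⊕ (Fin N × (Fin m ⊕ Fin m))) (Fin (N + 1) × Fin n) ℝ :=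
  Matrix.fromRows (Ex N A B G α₁)
    (Matrix.of fun kr jc => (Au m * α₁ * Eblk N (Abar A B α₁) (kr.1 : ℕ)) kr.2 jc)

def Fcl {n m q : ℕ} (N : ℕ) (A : ℕ → Matrix (Fin n) (Fin n) ℝ)
    (B : ℕ → Matrix (Fin n) (Fin m) ℝ) (G : ℕ → Matrix (Fin q) (Fin n) ℝ)
    (H : ℕ → Fin q → ℝ) (α₁ : Matrix (Fin m) (Fin n) ℝ) (α₂ : Fin m → ℝ)
    (x : Fin n → ℝ) (ε : ℝ) : (Fin (N + 1) × Fin q) ⊕ (Fin N × (Fin m ⊕ Fin m)) → ℝ :=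
  Sum.elim (Fx N A B G H α₁ α₂ x)
    (fun kr => ε - (Au m).mulVec (Sk A B α₁ α₂ x (kr.1 : ℕ)) kr.2)

def AbM (N n : ℕ) :
    Matrix ((Fin (N + 1) × Fin n) ⊕ (Fin (N + 1) × Fin n)) (Fin (N + 1) × Fin n) ℝ :=
  Matrix.fromRows 1 (-1)

def BbV (N n : ℕ) : (Fin (N + 1) × Fin n) ⊕ (Fin (N + 1) × Fin n) → ℝ := fun _ => 1

def trajOL {n m : ℕ} (A : ℕ → Matrix (Fin n) (Fin n) ℝ) (B : ℕ → Matrix (Fin n) (Fin m) ℝ)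
    (u : ℕ → Fin m → ℝ) (d : ℕ → Fin n → ℝ) (x0 : Fin n → ℝ) : ℕ → Fin n → ℝ
  | 0 => x0
  | k + 1 => (A k).mulVec (trajOL A B u d x0 k) + (B k).mulVec (u k) + d k

def Eol {n q : ℕ} (N : ℕ) (A : ℕ → Matrix (Fin n) (Fin n) ℝ)
    (G : ℕ → Matrix (Fin q) (Fin n) ℝ) :
    Matrix (Fin (N + 1) × Fin q) (Fin (N + 1) × Fin n) ℝ :=
  Matrix.of fun kr jc => (G (kr.1 : ℕ) * Eblk N A (kr.1 : ℕ)) kr.2 jc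

def Fol {n m q : ℕ} (N : ℕ) (A : ℕ → Matrix (Fin n) (Fin n) ℝ)
    (B : ℕ → Matrix (Fin n) (Fin m) ℝ) (G : ℕ → Matrix (Fin q) (Fin n) ℝ)
    (H : ℕ → Fin q → ℝ) (x : Fin n → ℝ) (ut : ℕ → Fin m → ℝ) (ε : ℝ) :
    Fin (N + 1) × Fin q → ℝ :=
  fun kr => H (kr.1 : ℕ) kr.2
    - (G (kr.1 : ℕ)).mulVec ((mprod A 0 (kr.1 : ℕ)).mulVec x) kr.2
    - ε * (G (kr.1 : ℕ)).mulVec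
        (∑ i ∈ Finset.range (kr.1 : ℕ), (mprod A (i + 1) (kr.1 : ℕ) * B i).mulVec (ut i)) kr.2

section Certificate

variable {ι κ : Type*} [Fintype κ] [DecidableEq κ]

lemma mulVec_le_of_certificate {E : Matrix ι κ ℝ} {F : ι → ℝ} {μ : ℝ}
    {P : Matrix ι (κ ⊕ κ) ℝ} (hP : ∀ i j, 0 ≤ P i j)
    (hPA : P * (fromRows 1 (-1) : Matrix (κ ⊕ κ) κ ℝ) = μ • E)
    (hPB : P *ᵥ (fun _ => 1) ≤ F) {δ : κ → ℝ} (hδ : ∀ j, |δ j| ≤ μ) : E *ᵥ δ ≤ F := by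
  have hP1 : 0 ≤ P *ᵥ (fun _ => 1) := fun i => sum_nonneg fun j _ => by simpa using hP i j
  rcases le_or_gt μ 0 with hμ | hμ
  · have hδ0 : δ = 0 := funext fun j => abs_nonpos_iff.mp ((hδ j).trans hμ)
    simpa [hδ0] using hP1.trans hPB
  intro i
  have hsplit : (fromRows 1 (-1) : Matrix (κ ⊕ κ) κ ℝ) *ᵥ δ = Sum.elim δ (-δ) := by
    rw [fromRows_mulVec, one_mulVec, neg_mulVec, one_mulVec]
  refine le_of_mul_le_mul_left ?_ hμ
  calc μ * (E *ᵥ δ) i = ((μ • E) *ᵥ δ) i := by rw [smul_mulVec, Pi.smul_apply, smul_eq_mul]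
    _ = (P *ᵥ Sum.elim δ (-δ)) i := by rw [← hPA, ← mulVec_mulVec, hsplit]
    _ ≤ (P *ᵥ fun _ => μ) i := by
        refine sum_le_sum fun s _ => mul_le_mul_of_nonneg_left ?_ (hP i s)
        rcases s with j | j
        · exact (le_abs_self _).trans (hδ j)
        · exact (neg_le_abs _).trans (hδ j)
    _ = μ * (P *ᵥ fun _ => 1) i := by simp [mulVec, dotProduct, mul_sum, mul_add, mul_comm]
    _ ≤ μ * F i := mul_le_mul_of_nonneg_left (hPB i) hμ.le

lemma exists_certificate_of_forall_mulVec_le {E : Matrix ι κ ℝ} {F : ι → ℝ} {μ : ℝ}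
    (hμ : 0 ≤ μ) (h : ∀ δ : κ → ℝ, (∀ j, |δ j| ≤ μ) → E *ᵥ δ ≤ F) :
    ∃ P : Matrix ι (κ ⊕ κ) ℝ, (∀ i j, 0 ≤ P i j) ∧
      P * (fromRows 1 (-1) : Matrix (κ ⊕ κ) κ ℝ) = μ • E ∧ P *ᵥ (fun _ => 1) ≤ F := by
  refine ⟨μ • fromCols (of fun i j => max (E i j) 0) (of fun i j => max (-E i j) 0),
    ?_, ?_, fun i => ?_⟩
  · rintro i (j | j) <;> exact mul_nonneg hμ (le_max_right _ _)
  · ext i j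
    rw [Matrix.smul_mul, fromCols_mul_fromRows]
    simp [← sub_eq_add_neg, max_zero_sub_max_neg_zero_eq_self]
  · have hi := h (fun j => if 0 ≤ E i j then μ else -μ)
      (fun j => by split_ifs <;> simp [abs_of_nonneg hμ]) i
    refine le_trans (le_of_eq ?_) hi
    simp only [mulVec, dotProduct, Matrix.smul_apply, fromCols, of_apply, Fintype.sum_sum_type,
      Sum.elim_inl, Sum.elim_inr, ← sum_add_distrib]
    refine sum_congr rfl fun j _ => ?_
    split_ifs with hE
    · simp [hE, mul_comm]
    · simp [(not_le.mp hE).le]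
      ring

end Certificate

section Scaling

variable {V : Type*} [NormedAddCommGroup V] [NormedSpace ℝ V] {ε : ℝ} {v : V}

lemma smul_inv_smul_of_norm_le (h : ‖v‖ ≤ ε) : ε • ε⁻¹ • v = v := by
  rcases eq_or_ne ε 0 with rfl | hε
  · simpa using (norm_le_zero_iff.mp h).symm
  · exact smul_inv_smul₀ hε v

lemma norm_inv_smul_le_one (h : ‖v‖ ≤ ε) : ‖ε⁻¹ • v‖ ≤ 1 := by
  rw [norm_smul, norm_inv, Real.norm_eq_abs]
  exact inv_mul_le_one_of_le₀ (h.trans (le_abs_self ε)) (abs_nonneg ε)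

end Scaling

lemma mprod_eq_one_of_le {n : ℕ} (M : ℕ → Matrix (Fin n) (Fin n) ℝ) {i k : ℕ} (h : k ≤ i) :
    mprod M i k = 1 := by
  simp [mprod, Nat.sub_eq_zero_of_le h]

lemma mprod_succ {n : ℕ} (M : ℕ → Matrix (Fin n) (Fin n) ℝ) {i k : ℕ} (h : i ≤ k) :
    mprod M i (k + 1) = M k * mprod M i k := by
  obtain ⟨l, rfl⟩ := Nat.exists_eq_add_of_le h
  simp [mprod, show i + l + 1 - i = l + 1 by omega, List.range'_1_concat]

lemma trajOL_eq_sum {n m : ℕ} (A : ℕ → Matrix (Fin n) (Fin n) ℝ)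
    (B : ℕ → Matrix (Fin n) (Fin m) ℝ) (u : ℕ → Fin m → ℝ) (d : ℕ → Fin n → ℝ)
    (x0 : Fin n → ℝ) (k : ℕ) :
    trajOL A B u d x0 k = mprod A 0 k *ᵥ x0
      + ∑ i ∈ range k, mprod A (i + 1) k *ᵥ (B i *ᵥ u i + d i) := by
  induction k with
  | zero => simp [trajOL, mprod_eq_one_of_le]
  | succ k ih =>
    have hstep : ∀ i ∈ range k, A k *ᵥ (mprod A (i + 1) k *ᵥ (B i *ᵥ u i + d i))
        = mprod A (i + 1) (k + 1) *ᵥ (B i *ᵥ u i + d i) := fun i hi => by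
      rw [mprod_succ A (mem_range.mp hi), mulVec_mulVec]
    rw [trajOL, ih, mulVec_add, mulVec_sum, sum_congr rfl hstep, sum_range_succ,
      mprod_succ A k.zero_le, mprod_eq_one_of_le A le_rfl, ← mulVec_mulVec, one_mulVec]
    abel

def blockOf {n N : ℕ} (δ : Fin (N + 1) × Fin n → ℝ) (j : ℕ) : Fin n → ℝ :=
  fun c => if h : j < N + 1 then δ (⟨j, h⟩, c) else 0

/-- Block `i + 1` carries `d i`, matching the zero leading column block of `Eol`. -/
def stackDist {n : ℕ} (N : ℕ) (d : ℕ → Fin n → ℝ) : Fin (N + 1) × Fin n → ℝ :=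
  fun jc => if (jc.1 : ℕ) = 0 then 0 else d ((jc.1 : ℕ) - 1) jc.2

lemma blockOf_stackDist_succ {n N : ℕ} (d : ℕ → Fin n → ℝ) {i : ℕ} (hi : i < N) :
    blockOf (stackDist N d) (i + 1) = d i := by
  funext c
  simp [blockOf, stackDist, hi]

lemma abs_stackDist_le {n N : ℕ} {d : ℕ → Fin n → ℝ} {μ : ℝ} (hμ : 0 ≤ μ)
    (hd : ∀ i, i < N → ‖d i‖ ≤ μ) (jc : Fin (N + 1) × Fin n) : |stackDist N d jc| ≤ μ := by
  obtain ⟨⟨j, hj⟩, c⟩ := jc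
  unfold stackDist
  split_ifs with h0
  · simpa using hμ
  · exact (norm_le_pi_norm (d (j - 1)) c).trans (hd _ (by omega))

lemma norm_blockOf_le {n N : ℕ} {δ : Fin (N + 1) × Fin n → ℝ} {μ : ℝ} (hμ : 0 ≤ μ)
    (hδ : ∀ jc, |δ jc| ≤ μ) (j : ℕ) : ‖blockOf δ j‖ ≤ μ := by
  refine (pi_norm_le_iff_of_nonneg hμ).mpr fun c => ?_
  unfold blockOf
  split_ifs
  · exact hδ _
  · simpa using hμ

lemma Eblk_mulVec {n N : ℕ} (M : ℕ → Matrix (Fin n) (Fin n) ℝ) (δ : Fin (N + 1) × Fin n → ℝ)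
    {k : ℕ} (hk : k ≤ N) :
    Eblk N M k *ᵥ δ = ∑ i ∈ range k, mprod M (i + 1) k *ᵥ blockOf δ (i + 1) := by
  funext row
  set f : ℕ → ℝ := fun j => if 1 ≤ j ∧ j ≤ k then (mprod M j k *ᵥ blockOf δ j) row else 0
  have hblock : ∀ j : Fin (N + 1), ∑ c, Eblk N M k row (j, c) * δ (j, c) = f j := by
    intro j
    simp only [f, Eblk, of_apply, mulVec, dotProduct, blockOf, j.isLt, dite_true]
    split_ifs <;> simp
  have hfilter : (range N).filter (fun i => i + 1 ≤ k) = range k := by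
    ext i; simp only [mem_filter, mem_range]; omega
  calc (Eblk N M k *ᵥ δ) row = ∑ j ∈ range (N + 1), f j := by
        rw [mulVec, dotProduct, Fintype.sum_prod_type, ← Fin.sum_univ_eq_sum_range]
        exact sum_congr rfl fun j _ => hblock j
    _ = ∑ i ∈ range k, f (i + 1) := by
        rw [sum_range_succ', ← hfilter, sum_filter, show f 0 = 0 by simp [f], add_zero]
        exact sum_congr rfl fun i _ => by by_cases h : i + 1 ≤ k <;> simp [f, h]
    _ = _ := by
        rw [Finset.sum_apply]
        exact sum_congr rfl fun i hi => by simp [f, (mem_range.mp hi).nat_succ_le]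

lemma Eol_mulVec_apply {n q N : ℕ} (A : ℕ → Matrix (Fin n) (Fin n) ℝ)
    (G : ℕ → Matrix (Fin q) (Fin n) ℝ) (δ : Fin (N + 1) × Fin n → ℝ) (k : Fin (N + 1))
    (r : Fin q) :
    (Eol N A G *ᵥ δ) (k, r)
      = (G k *ᵥ ∑ i ∈ range k, mprod A (i + 1) k *ᵥ blockOf δ (i + 1)) r := by
  rw [← Eblk_mulVec A δ (Nat.lt_succ_iff.mp k.isLt), mulVec_mulVec]
  rfl

lemma mulVec_trajOL_sub_eq {n m q N : ℕ} (A : ℕ → Matrix (Fin n) (Fin n) ℝ)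
    (B : ℕ → Matrix (Fin n) (Fin m) ℝ) (G : ℕ → Matrix (Fin q) (Fin n) ℝ)
    (H : ℕ → Fin q → ℝ) (x : Fin n → ℝ) (ε₀ : ℝ) {u ut : ℕ → Fin m → ℝ}
    (d : ℕ → Fin n → ℝ) (k : Fin (N + 1)) (hu : ∀ i, i < (k : ℕ) → u i = ε₀ • ut i)
    (r : Fin q) :
    (G k *ᵥ trajOL A B u d x k) r - H k r
      = (G k *ᵥ ∑ i ∈ range k, mprod A (i + 1) k *ᵥ d i) r - Fol N A B G H x ut ε₀ (k, r) := by
  have hsplit : ∑ i ∈ range k, mprod A (i + 1) k *ᵥ (B i *ᵥ u i + d i)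
      = ε₀ • ∑ i ∈ range k, (mprod A (i + 1) k * B i) *ᵥ ut i
        + ∑ i ∈ range k, mprod A (i + 1) k *ᵥ d i := by
    rw [smul_sum, ← sum_add_distrib]
    refine sum_congr rfl fun i hi => ?_
    rw [hu i (mem_range.mp hi), mulVec_add]
    simp only [mulVec_smul, mulVec_mulVec]
  rw [trajOL_eq_sum, hsplit]
  simp only [Fol, mulVec_add, mulVec_smul, Pi.add_apply, Pi.smul_apply, smul_eq_mul]
  ring

lemma forall_trajOL_le_iff {n m q N : ℕ} (A : ℕ → Matrix (Fin n) (Fin n) ℝ)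
    (B : ℕ → Matrix (Fin n) (Fin m) ℝ) (G : ℕ → Matrix (Fin q) (Fin n) ℝ)
    (H : ℕ → Fin q → ℝ) (x : Fin n → ℝ) (ε₀ : ℝ) {u ut : ℕ → Fin m → ℝ}
    (hu : ∀ i, i < N → u i = ε₀ • ut i) {μ : ℝ} (hμ : 0 ≤ μ) :
    (∀ d : ℕ → Fin n → ℝ, (∀ i, i < N → ‖d i‖ ≤ μ) →
        ∀ k, k ≤ N → G k *ᵥ trajOL A B u d x k ≤ H k) ↔
      ∀ δ : Fin (N + 1) × Fin n → ℝ, (∀ jc, |δ jc| ≤ μ) →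
        Eol N A G *ᵥ δ ≤ Fol N A B G H x ut ε₀ := by
  have hu' (k : Fin (N + 1)) : ∀ i, i < (k : ℕ) → u i = ε₀ • ut i :=
    fun i hi => hu i (hi.trans_le (Nat.lt_succ_iff.mp k.isLt))
  constructor
  · intro hrob δ hδ ⟨k, r⟩
    have hk := hrob (fun i => blockOf δ (i + 1)) (fun i _ => norm_blockOf_le hμ hδ _) k
      (Nat.lt_succ_iff.mp k.isLt) r
    have := mulVec_trajOL_sub_eq A B G H x ε₀ (fun i => blockOf δ (i + 1)) k (hu' k) r
    rw [Eol_mulVec_apply]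
    linarith
  · intro hstack d hd k hk r
    have hδ := hstack (stackDist N d) (abs_stackDist_le hμ hd) (⟨k, Nat.lt_succ_of_le hk⟩, r)
    have := mulVec_trajOL_sub_eq A B G H x ε₀ d ⟨k, Nat.lt_succ_of_le hk⟩ (hu' _) r
    rw [Eol_mulVec_apply] at hδ
    dsimp only at hδ this
    rw [sum_congr rfl fun i hi => by
      rw [blockOf_stackDist_succ d ((mem_range.mp hi).trans_le hk)]] at hδ
    linarith

/-- Resilience metric under open-loop controllers, with input bound `ε₀`: the supremum
of admissible disturbance bounds `μ` in the robust formulation (over input sequences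
`u` with `‖u(i)‖∞ ≤ ε₀`) equals the supremum in the Farkas-certified formulation
(over normalized inputs `ũ` with `‖ũ(i)‖∞ ≤ 1`, applied inputs `u(i) = ε₀ ũ(i)`). -/
theorem resilience_openLoop {n m q N : ℕ}
    (A : ℕ → Matrix (Fin n) (Fin n) ℝ) (B : ℕ → Matrix (Fin n) (Fin m) ℝ)
    (G : ℕ → Matrix (Fin q) (Fin n) ℝ) (H : ℕ → Fin q → ℝ)
    (x : Fin n → ℝ) (ε₀ : ℝ) (hε₀ : 0 ≤ ε₀) :
    sSup {μ : ℝ | 0 ≤ μ ∧ ∃ u : ℕ → Fin m → ℝ,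
        (∀ i, i < N → ‖u i‖ ≤ ε₀) ∧
        ∀ d : ℕ → Fin n → ℝ, (∀ i, i < N → ‖d i‖ ≤ μ) →
          ∀ k, k ≤ N → (G k).mulVec (trajOL A B u d x k) ≤ H k} =
    sSup {μ : ℝ | 0 ≤ μ ∧ ∃ (ut : ℕ → Fin m → ℝ)
        (P : Matrix (Fin (N + 1) × Fin q)
          ((Fin (N + 1) × Fin n) ⊕ (Fin (N + 1) × Fin n)) ℝ),
        (∀ i, i < N → ‖ut i‖ ≤ 1) ∧
        (∀ i j, 0 ≤ P i j) ∧
        P * AbM N n = μ • Eol N A G ∧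
        P.mulVec (BbV N n) ≤ Fol N A B G H x ut ε₀} := by
  congr 1
  ext μ
  refine and_congr_right fun hμ => ⟨?_, ?_⟩
  · rintro ⟨u, hu, hrob⟩
    have hscale : ∀ i, i < N → u i = ε₀ • ε₀⁻¹ • u i :=
      fun i hi => (smul_inv_smul_of_norm_le (hu i hi)).symm
    obtain ⟨P, hP, hPA, hPB⟩ := exists_certificate_of_forall_mulVec_le hμ
      ((forall_trajOL_le_iff A B G H x ε₀ hscale hμ).mp hrob)
    exact ⟨fun i => ε₀⁻¹ • u i, P, fun i hi => norm_inv_smul_le_one (hu i hi), hP, hPA, hPB⟩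
  · rintro ⟨ut, P, hut, hP, hPA, hPB⟩
    refine ⟨fun i => ε₀ • ut i, fun i hi => ?_,
      (forall_trajOL_le_iff A B G H x ε₀ (fun _ _ => rfl) hμ).mpr
        fun δ hδ => mulVec_le_of_certificate hP hPA hPB hδ⟩
    calc ‖ε₀ • ut i‖ = ε₀ * ‖ut i‖ := by rw [norm_smul, Real.norm_of_nonneg hε₀]
      _ ≤ ε₀ := mul_le_of_le_one_right hε₀ (hut i hi)
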